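/- Let N_θ(s) = 2∫_0^s ∫_ℝ ∫_{1/(|a|t)}^∞ |a| f(a) b e^{−b²/2}/√(2π) db da dt where f is a probability density on ℝ with finite first moment. Then for every s ≥ 1, N_θ(1/s) ≥ (e^{−2s}/√(2πs)) · P(|A| ≥ √s), where A has density f. -/

import Mathlib

open MeasureTheory

open Real Set Filter

lemma tail_gaussian (c : ℝ) :
    ∫ b in Set.Ici c, b * Real.exp (-b ^ 2 / 2) = Real.exp (-c ^ 2 / 2) := by
  rw [MeasureTheory.integral_Ici_eq_integral_Ioi]
  have hderiv : ∀ x ∈ Set.Ici c, HasDerivAt (fun x : ℝ => -Real.exp (-x ^ 2 / 2))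
      (x * Real.exp (-x ^ 2 / 2)) x := by
    intro x _
    have h1 : HasDerivAt (fun x : ℝ => -x ^ 2 / 2) (-x) x := by
      have := (hasDerivAt_pow 2 x).neg.div_const 2
      exact this.congr_deriv (by push_cast; ring)
    have := (h1.exp).neg
    exact this.congr_deriv (by ring)
  have hint : MeasureTheory.IntegrableOn (fun x : ℝ => x * Real.exp (-x ^ 2 / 2)) (Set.Ioi c) := by
    have : MeasureTheory.Integrable (fun x : ℝ => x * Real.exp (-(1/2) * x ^ 2)) :=
      integrable_mul_exp_neg_mul_sq (by norm_num)
    have h2 : (fun x : ℝ => x * Real.exp (-x ^ 2 / 2)) = fun x : ℝ => x * Real.exp (-(1/2) * x ^ 2) := by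
      funext x; ring_nf
    rw [h2]; exact this.integrableOn
  have htend : Filter.Tendsto (fun x : ℝ => -Real.exp (-x ^ 2 / 2)) Filter.atTop (nhds 0) := by
    rw [← neg_zero]
    apply Filter.Tendsto.neg
    apply Real.tendsto_exp_atBot.comp
    apply Filter.Tendsto.atBot_div_const (by norm_num)
    exact Filter.tendsto_neg_atBot_iff.mpr (Filter.tendsto_pow_atTop (two_ne_zero))
  have := MeasureTheory.integral_Ioi_of_hasDerivAt_of_tendsto
    (by exact ((Real.continuous_exp.comp (by continuity)).neg.continuousWithinAt))
    (fun x hx => hderiv x (Set.Ioi_subset_Ici_self hx)) hint htend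
  rw [this]; ring

lemma inner_eq (k c : ℝ) :
    (∫ b in Set.Ici c, k * b * Real.exp (-b ^ 2 / 2) / Real.sqrt (2 * Real.pi)) =
      k / Real.sqrt (2 * Real.pi) * Real.exp (-c ^ 2 / 2) := by
  have h : (fun b => k * b * Real.exp (-b ^ 2 / 2) / Real.sqrt (2 * Real.pi)) =
      fun b => (k / Real.sqrt (2 * Real.pi)) * (b * Real.exp (-b ^ 2 / 2)) := by
    funext b; ring
  rw [h, integral_const_mul, tail_gaussian]

/-- Let `N_θ(s) = 2∫_0^s ∫_ℝ ∫_{1/(|a|t)}^∞ |a| f(a) b e^{−b²/2}/√(2π) db da dt`, where `f`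
is a probability density with finite first moment. Then for every `s ≥ 1`,
`N_θ(1/s) ≥ (e^{−2s}/√(2πs)) P(|A| ≥ √s)` where `A` has density `f`. -/
theorem orlicz_gaussian_product_lower_bound (f : ℝ → ℝ) (hf0 : ∀ a, 0 ≤ f a)
    (hfm : Measurable f) (hf1 : (∫ a, f a) = 1)
    (hfmom : Integrable (fun a => |a| * f a)) :
    ∀ s : ℝ, 1 ≤ s →
      (Real.exp (-2 * s) / Real.sqrt (2 * Real.pi * s)) *
          (∫ a in {a : ℝ | Real.sqrt s ≤ |a|}, f a) ≤
        2 * ∫ t in (0 : ℝ)..(1 / s),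
          ∫ a, (∫ b in Set.Ici (1 / (|a| * t)),
            |a| * f a * b * Real.exp (-b ^ 2 / 2) / Real.sqrt (2 * Real.pi)) := by
  intro s hs
  have hs0 : (0 : ℝ) < s := by linarith
  have hsq : (0 : ℝ) < Real.sqrt s := Real.sqrt_pos.mpr hs0
  have hsq1 : (1 : ℝ) ≤ Real.sqrt s := by
    rw [show (1:ℝ) = Real.sqrt 1 by simp]; exact Real.sqrt_le_sqrt hs
  have hpi : (0 : ℝ) < Real.sqrt (2 * Real.pi) := Real.sqrt_pos.mpr (by positivity)
  -- integrability of f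
  have hfint : Integrable f := by
    by_contra h
    rw [integral_undef h] at hf1
    norm_num at hf1
  -- the simplified integrand
  set F : ℝ → ℝ → ℝ := fun t a =>
    |a| * f a / Real.sqrt (2 * Real.pi) * Real.exp (-(1 / (|a| * t)) ^ 2 / 2) with hF
  have hrw : ∀ t : ℝ, (∫ a, (∫ b in Set.Ici (1 / (|a| * t)),
      |a| * f a * b * Real.exp (-b ^ 2 / 2) / Real.sqrt (2 * Real.pi))) = ∫ a, F t a := by
    intro t
    congr 1
    funext a
    rw [inner_eq]
  -- pointwise bounds on F
  have hF0 : ∀ t a, 0 ≤ F t a := by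
    intro t a
    exact mul_nonneg (div_nonneg (mul_nonneg (abs_nonneg a) (hf0 a))
      (Real.sqrt_nonneg _)) (Real.exp_pos _).le
  have hFle : ∀ t a, F t a ≤ |a| * f a / Real.sqrt (2 * Real.pi) := by
    intro t a
    have h1 : Real.exp (-(1 / (|a| * t)) ^ 2 / 2) ≤ 1 := by
      apply Real.exp_le_one_iff.mpr
      have : (0:ℝ) ≤ (1 / (|a| * t)) ^ 2 := sq_nonneg _
      linarith
    calc F t a ≤ |a| * f a / Real.sqrt (2 * Real.pi) * 1 :=
          mul_le_mul_of_nonneg_left h1 (div_nonneg (mul_nonneg (abs_nonneg a) (hf0 a))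
            (Real.sqrt_nonneg _))
      _ = |a| * f a / Real.sqrt (2 * Real.pi) := by ring
  have hbint : Integrable (fun a => |a| * f a / Real.sqrt (2 * Real.pi)) :=
    hfmom.div_const _
  -- joint measurability
  have hFmeas : StronglyMeasurable (fun p : ℝ × ℝ => F p.1 p.2) := by
    apply Measurable.stronglyMeasurable
    apply Measurable.mul
    · exact ((measurable_snd.abs.mul (hfm.comp measurable_snd)).div_const _)
    · exact (Real.measurable_exp.comp
        ((((measurable_const.div (measurable_snd.abs.mul measurable_fst)).pow_const 2).neg).div_const 2))
  have hFmeas_a : ∀ t, Measurable (fun a => F t a) := by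
    intro t
    exact hFmeas.measurable.comp measurable_prodMk_left
  -- integrability in a, for each t
  have hFint : ∀ t, Integrable (F t) := by
    intro t
    refine hbint.mono' ((hFmeas_a t).aestronglyMeasurable) (ae_of_all _ fun a => ?_)
    rw [Real.norm_eq_abs, abs_of_nonneg (hF0 t a)]
    exact hFle t a
  set g : ℝ → ℝ := fun t => ∫ a, F t a with hg
  have hgmeas : StronglyMeasurable g := hFmeas.integral_prod_right'
  have hg0 : ∀ t, 0 ≤ g t := fun t => integral_nonneg (hF0 t)
  set C0 : ℝ := ∫ a, |a| * f a / Real.sqrt (2 * Real.pi) with hC0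
  have hgle : ∀ t, g t ≤ C0 := fun t => integral_mono (hFint t) hbint (hFle t)
  -- interval integrability of g on [0, 1/s]
  have h1s : (0:ℝ) < 1 / s := by positivity
  have h2s : (0:ℝ) < 1 / (2 * s) := by positivity
  have h12 : 1 / (2 * s) ≤ 1 / s := by
    rw [div_le_div_iff₀ (by positivity) hs0]; linarith
  have hgint : IntervalIntegrable g volume 0 (1 / s) := by
    have : IntegrableOn g (Set.uIcc 0 (1 / s)) := by
      rw [Set.uIcc_of_le h1s.le]
      refine Measure.integrableOn_of_bounded (M := C0) (isCompact_Icc.measure_lt_top).ne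
        hgmeas.aestronglyMeasurable (ae_of_all _ fun t => ?_)
      rw [Real.norm_eq_abs, abs_of_nonneg (hg0 t)]
      exact hgle t
    exact this.intervalIntegrable
  have hgint1 : IntervalIntegrable g volume 0 (1 / (2 * s)) :=
    hgint.mono_set (Set.uIcc_subset_uIcc (by simp) (by
      rw [Set.uIcc_of_le h1s.le]; exact ⟨h2s.le, h12⟩))
  have hgint2 : IntervalIntegrable g volume (1 / (2 * s)) (1 / s) :=
    hgint.mono_set (Set.uIcc_subset_uIcc (by
      rw [Set.uIcc_of_le h1s.le]; exact ⟨h2s.le, h12⟩) (by simp [Set.uIcc_of_le h1s.le, h1s.le]))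
  have hss : Real.sqrt s * Real.sqrt s = s := Real.mul_self_sqrt hs0.le
  -- the constant C
  set P : ℝ := ∫ a in {a : ℝ | Real.sqrt s ≤ |a|}, f a with hP
  set C : ℝ := Real.sqrt s * Real.exp (-2 * s) / Real.sqrt (2 * Real.pi) * P with hC
  have hset : MeasurableSet {a : ℝ | Real.sqrt s ≤ |a|} :=
    measurableSet_le measurable_const measurable_id.abs
  -- key lower bound on g
  have hkey : ∀ t ∈ Set.Icc (1 / (2 * s)) (1 / s), C ≤ g t := by
    intro t ht
    have ht0 : 0 < t := lt_of_lt_of_le h2s ht.1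
    have step1 : ∫ a in {a : ℝ | Real.sqrt s ≤ |a|}, F t a ≤ g t :=
      setIntegral_le_integral (hFint t) (ae_of_all _ (hF0 t))
    have step2 : ∫ a in {a : ℝ | Real.sqrt s ≤ |a|},
        (Real.sqrt s * Real.exp (-2 * s) / Real.sqrt (2 * Real.pi)) * f a ≤
        ∫ a in {a : ℝ | Real.sqrt s ≤ |a|}, F t a := by
      refine setIntegral_mono_on ((hfint.const_mul _).integrableOn)
        ((hFint t).integrableOn) hset (fun a ha => ?_)
      have ha' : Real.sqrt s ≤ |a| := ha
      have ha0 : 0 < |a| := lt_of_lt_of_le hsq ha'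
      have hat : Real.sqrt s / (2 * s) ≤ |a| * t := by
        calc Real.sqrt s / (2 * s) = Real.sqrt s * (1 / (2 * s)) := by ring
          _ ≤ |a| * t := by
            apply mul_le_mul ha' ht.1 h2s.le ha0.le
      have hat0 : 0 < |a| * t := lt_of_lt_of_le (by positivity) hat
      have hc : 1 / (|a| * t) ≤ 2 * Real.sqrt s := by
        rw [div_le_iff₀ hat0]
        calc (1:ℝ) = (2 * Real.sqrt s) * (Real.sqrt s / (2 * s)) := by
              field_simp
              linear_combination -1 * hss
          _ ≤ (2 * Real.sqrt s) * (|a| * t) := by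
              apply mul_le_mul_of_nonneg_left hat (by positivity)
      have hc2 : (1 / (|a| * t)) ^ 2 ≤ 4 * s := by
        have h0 : 0 ≤ 1 / (|a| * t) := by positivity
        calc (1 / (|a| * t)) ^ 2 ≤ (2 * Real.sqrt s) ^ 2 := by
              apply sq_le_sq' (by linarith) hc
          _ = 4 * s := by
              rw [mul_pow, sq]
              linear_combination 4 * hss
      have hexp : Real.exp (-2 * s) ≤ Real.exp (-(1 / (|a| * t)) ^ 2 / 2) :=
        Real.exp_le_exp.mpr (by linarith)
      have key : Real.sqrt s * Real.exp (-2 * s) ≤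
          |a| * Real.exp (-(1 / (|a| * t)) ^ 2 / 2) :=
        mul_le_mul ha' hexp (Real.exp_pos _).le (abs_nonneg a)
      have := mul_le_mul_of_nonneg_right key
        (div_nonneg (hf0 a) (Real.sqrt_nonneg (2 * Real.pi)))
      calc (Real.sqrt s * Real.exp (-2 * s) / Real.sqrt (2 * Real.pi)) * f a
          = (Real.sqrt s * Real.exp (-2 * s)) * (f a / Real.sqrt (2 * Real.pi)) := by ring
        _ ≤ (|a| * Real.exp (-(1 / (|a| * t)) ^ 2 / 2)) * (f a / Real.sqrt (2 * Real.pi)) := this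
        _ = F t a := by rw [hF]; ring
    have step3 : C = ∫ a in {a : ℝ | Real.sqrt s ≤ |a|},
        (Real.sqrt s * Real.exp (-2 * s) / Real.sqrt (2 * Real.pi)) * f a := by
      rw [integral_const_mul, hC, hP]
    linarith
  -- splitting the interval integral
  have hsplit : (∫ t in (0:ℝ)..(1 / (2 * s)), g t) + ∫ t in (1 / (2 * s))..(1 / s), g t
      = ∫ t in (0:ℝ)..(1 / s), g t :=
    intervalIntegral.integral_add_adjacent_intervals hgint1 hgint2
  have hpart1 : 0 ≤ ∫ t in (0:ℝ)..(1 / (2 * s)), g t :=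
    intervalIntegral.integral_nonneg h2s.le (fun t _ => hg0 t)
  have hpart2 : C * (1 / (2 * s)) ≤ ∫ t in (1 / (2 * s))..(1 / s), g t := by
    have := intervalIntegral.integral_mono_on h12 (intervalIntegrable_const (c := C))
      hgint2 (fun t ht => hkey t ht)
    rwa [intervalIntegral.integral_const, smul_eq_mul, show (1 / s - 1 / (2 * s)) = 1 / (2 * s) by
      field_simp; ring, mul_comm] at this
  -- final arithmetic
  have hrw2 : ∫ t in (0:ℝ)..(1 / s),
      (∫ a, (∫ b in Set.Ici (1 / (|a| * t)),
        |a| * f a * b * Real.exp (-b ^ 2 / 2) / Real.sqrt (2 * Real.pi))) =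
      ∫ t in (0:ℝ)..(1 / s), g t := by
    apply intervalIntegral.integral_congr
    intro t _
    exact hrw t
  rw [hrw2]
  have hfinal : (Real.exp (-2 * s) / Real.sqrt (2 * Real.pi * s)) * P = C / s := by
    rw [Real.sqrt_mul (by positivity) s, hC]
    field_simp
    linear_combination (-P) * hss
  rw [hfinal]
  have : C / s = 2 * (C * (1 / (2 * s))) := by field_simp
  rw [this]
  linarith
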